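/- arXiv:2404.00910 — 5 statements merged into one kernel-verified Lean document; each statement's English description precedes it below -/
import Mathlib

section
/- Let 0 < p < 1, let X be a vector space over 𝕂, and suppose (f_n) are linear functionals and (τ_n), (ω_n), (g_m) are such that for every x in a subspace D: the sequences (f_n(x)) and (g_m(x)) lie in ℓ^p, and x = ∑_m g_m(x) ω_m pointwise under every f_n, i.e. f_n(x) = ∑_m g_m(x) f_n(ω_m) for all n. Then for every x ∈ D with (f_n(x)) ≠ 0, writing ‖θ_f x‖ = ∑_n |f_n(x)|^p, ‖θ_g x‖ = ∑_m |g_m(x)|^p, ‖θ_f x‖_0 = #{n : f_n(x) ≠ 0}, and C = sup_{n,m} |f_n(ω_m)| (assumed finite), one has (1/C^p) ‖θ_f x‖ ≤ ‖θ_f x‖_0 · ‖θ_g x‖. -/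
open scoped ENNReal

lemma enn_tsum_rpow_le (p : ℝ) (hp0 : 0 < p) (hp1 : p ≤ 1) (v : ℕ → ℝ≥0∞) :
    (∑' m, v m) ^ p ≤ ∑' m, v m ^ p := by
  set X := ∑' m, v m ^ p with hX
  have key : ∀ s : Finset ℕ, (∑ i ∈ s, v i) ^ p ≤ X := by
    intro s
    calc (∑ i ∈ s, v i) ^ p ≤ ∑ i ∈ s, v i ^ p :=
          Finset.le_sum_of_subadditive (· ^ p) (by simp [ENNReal.zero_rpow_of_pos hp0])
            (fun a b => ENNReal.rpow_add_le_add_rpow a b hp0.le hp1) s v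
      _ ≤ X := ENNReal.sum_le_tsum s
  rw [ENNReal.tsum_eq_iSup_sum]
  have h1 : (⨆ s : Finset ℕ, ∑ i ∈ s, v i) ≤ X ^ (1 / p) := by
    refine iSup_le fun s => ?_
    have h2 := ENNReal.rpow_le_rpow (key s) (by positivity : (0:ℝ) ≤ 1 / p)
    rwa [← ENNReal.rpow_mul, mul_one_div, div_self hp0.ne', ENNReal.rpow_one] at h2
  have h3 := ENNReal.rpow_le_rpow h1 hp0.le
  rwa [← ENNReal.rpow_mul, one_div, inv_mul_cancel₀ hp0.ne', ENNReal.rpow_one] at h3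

lemma real_tsum_rpow_le (p : ℝ) (hp0 : 0 < p) (hp1 : p ≤ 1) (u : ℕ → ℝ)
    (hu : ∀ m, 0 ≤ u m) (h1 : Summable u) (h2 : Summable fun m => u m ^ p) :
    (∑' m, u m) ^ p ≤ ∑' m, u m ^ p := by
  have e1 : ENNReal.ofReal ((∑' m, u m) ^ p) = (∑' m, ENNReal.ofReal (u m)) ^ p := by
    rw [← ENNReal.ofReal_tsum_of_nonneg hu h1,
      ENNReal.ofReal_rpow_of_nonneg (tsum_nonneg hu) hp0.le]
  have e2 : ENNReal.ofReal (∑' m, u m ^ p) = ∑' m, ENNReal.ofReal (u m) ^ p := by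
    rw [ENNReal.ofReal_tsum_of_nonneg (fun m => Real.rpow_nonneg (hu m) p) h2]
    exact tsum_congr fun m => (ENNReal.ofReal_rpow_of_nonneg (hu m) hp0.le).symm
  have := enn_tsum_rpow_le p hp0 hp1 (fun m => ENNReal.ofReal (u m))
  rw [← e1, ← e2] at this
  exact (ENNReal.ofReal_le_ofReal_iff (tsum_nonneg fun m => Real.rpow_nonneg (hu m) p)).mp this

/-- One-sided inequality in the unexpected uncertainty principle: if for `x` in a subspace
`D` the coefficient sequences lie in `ℓ^p` (`0 < p < 1`) and
`f n x = ∑ m, g m x * f n (ω m)`, then with `C = sup_{n,m} |f n (ω m)|`,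
`(1/C^p) ∑ n, |f n x|^p ≤ #{n : f n x ≠ 0} * ∑ m, |g m x|^p`. -/
theorem one_sided_unexpected_uncertainty (p : ℝ) (hp0 : 0 < p) (hp1 : p < 1)
    {X : Type*} [AddCommGroup X] [Module ℂ X] (D : Submodule ℂ X)
    (f g : ℕ → X →ₗ[ℂ] ℂ) (ω : ℕ → X) (C : ℝ)
    (hC : ∀ n m, ‖f n (ω m)‖ ≤ C)
    (hf : ∀ x ∈ D, Summable (fun n => ‖f n x‖ ^ p))
    (hg : ∀ x ∈ D, Summable (fun m => ‖g m x‖ ^ p))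
    (hexp : ∀ x ∈ D, ∀ n, HasSum (fun m => g m x * f n (ω m)) (f n x))
    (x : X) (hx : x ∈ D) (hx0 : ∃ n, f n x ≠ 0)
    (hfin : {n | f n x ≠ 0}.Finite) :
    (1 / C ^ p) * ∑' n, ‖f n x‖ ^ p ≤
      (hfin.toFinset.card : ℝ) * ∑' m, ‖g m x‖ ^ p := by
  obtain ⟨n0, hn0⟩ := hx0
  have hC0 : 0 ≤ C := le_trans (norm_nonneg _) (hC 0 0)
  have hCpos : 0 < C := by
    rcases hC0.lt_or_eq with h | h
    · exact h
    · exfalso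
      have hz : ∀ m, g m x * f n0 (ω m) = 0 := by
        intro m
        have h1 : ‖f n0 (ω m)‖ ≤ 0 := h ▸ hC n0 m
        have h2 : f n0 (ω m) = 0 := norm_le_zero_iff.mp h1
        simp [h2]
      have h0 : HasSum (fun m => g m x * f n0 (ω m)) 0 := by
        simp only [hz]; exact hasSum_zero
      exact hn0 ((hexp x hx n0).unique h0)
  set G := ∑' m, ‖g m x‖ ^ p with hG
  have hG0 : 0 ≤ G := tsum_nonneg fun m => Real.rpow_nonneg (norm_nonneg _) p
  have hgs : Summable fun m => ‖g m x‖ := by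
    refine Summable.of_norm_bounded_eventually (hg x hx) ?_
    rw [Nat.cofinite_eq_atTop]
    filter_upwards [(hg x hx).tendsto_atTop_zero.eventually (gt_mem_nhds one_pos)] with m hm
    rw [Real.norm_eq_abs, abs_of_nonneg (norm_nonneg _)]
    rcases eq_or_lt_of_le (norm_nonneg (g m x)) with h | h
    · rw [← h, Real.zero_rpow hp0.ne']
    · have hle1 : ‖g m x‖ ≤ 1 := by
        by_contra hgt
        push_neg at hgt
        exact absurd hm (not_lt.mpr (Real.one_le_rpow hgt.le hp0.le))
      calc ‖g m x‖ = ‖g m x‖ ^ (1:ℝ) := (Real.rpow_one _).symm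
        _ ≤ ‖g m x‖ ^ p := Real.rpow_le_rpow_of_exponent_ge h hle1 hp1.le
  have hCp : (0:ℝ) < C ^ p := Real.rpow_pos_of_pos hCpos p
  have hkey : ∀ n, ‖f n x‖ ^ p ≤ C ^ p * G := by
    intro n
    set a : ℕ → ℂ := fun m => g m x * f n (ω m) with ha
    have hbnd : ∀ m, ‖a m‖ ≤ C * ‖g m x‖ := by
      intro m
      rw [ha]
      calc ‖g m x * f n (ω m)‖ = ‖g m x‖ * ‖f n (ω m)‖ := norm_mul _ _
        _ ≤ ‖g m x‖ * C := mul_le_mul_of_nonneg_left (hC n m) (norm_nonneg _)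
        _ = C * ‖g m x‖ := mul_comm _ _
    have hna : Summable fun m => ‖a m‖ :=
      Summable.of_nonneg_of_le (fun m => norm_nonneg _) hbnd (hgs.mul_left C)
    have hbndp : ∀ m, ‖a m‖ ^ p ≤ C ^ p * ‖g m x‖ ^ p := by
      intro m
      calc ‖a m‖ ^ p ≤ (C * ‖g m x‖) ^ p :=
            Real.rpow_le_rpow (norm_nonneg _) (hbnd m) hp0.le
        _ = C ^ p * ‖g m x‖ ^ p := Real.mul_rpow hC0 (norm_nonneg _)
    have h2 : Summable fun m => ‖a m‖ ^ p :=
      Summable.of_nonneg_of_le (fun m => Real.rpow_nonneg (norm_nonneg _) p) hbndp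
        ((hg x hx).mul_left (C ^ p))
    have h1 : ‖f n x‖ ≤ ∑' m, ‖a m‖ := by
      rw [← (hexp x hx n).tsum_eq]
      exact norm_tsum_le_tsum_norm hna
    calc ‖f n x‖ ^ p ≤ (∑' m, ‖a m‖) ^ p :=
          Real.rpow_le_rpow (norm_nonneg _) h1 hp0.le
      _ ≤ ∑' m, ‖a m‖ ^ p :=
          real_tsum_rpow_le p hp0 hp1.le _ (fun m => norm_nonneg _) hna h2
      _ ≤ ∑' m, C ^ p * ‖g m x‖ ^ p := Summable.tsum_le_tsum hbndp h2 ((hg x hx).mul_left _)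
      _ = C ^ p * G := tsum_mul_left
  have hsum : ∑' n, ‖f n x‖ ^ p = ∑ n ∈ hfin.toFinset, ‖f n x‖ ^ p := by
    refine tsum_eq_sum fun n hn => ?_
    have h2 : f n x = 0 := by simpa using hn
    simp [h2, Real.zero_rpow hp0.ne']
  have hbound : ∑ n ∈ hfin.toFinset, ‖f n x‖ ^ p ≤
      (hfin.toFinset.card : ℝ) * (C ^ p * G) := by
    have := Finset.sum_le_card_nsmul hfin.toFinset (fun n => ‖f n x‖ ^ p) (C ^ p * G)
      (fun n _ => hkey n)
    simpa [nsmul_eq_mul] using this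
  calc (1 / C ^ p) * ∑' n, ‖f n x‖ ^ p
      ≤ (1 / C ^ p) * ((hfin.toFinset.card : ℝ) * (C ^ p * G)) := by
        apply mul_le_mul_of_nonneg_left _ (by positivity)
        rw [hsum]; exact hbound
    _ = (hfin.toFinset.card : ℝ) * G := by field_simp
end

section
/- Let (τ_j)_{j=1}^n and (ω_j)_{j=1}^n be Parseval frames for a finite-dimensional Hilbert space H (i.e., ‖h‖² = ∑_j |⟨h, τ_j⟩|² and ‖h‖² = ∑_j |⟨h, ω_j⟩|² for all h). Then for every nonzero h ∈ H, ‖θ_τ h‖_0 · ‖θ_ω h‖_0 ≥ 1 / max_{j,k} |⟨τ_j, ω_k⟩|², where θ_τ h = (⟨h, τ_j⟩)_{j=1}^n and ‖·‖_0 counts nonzero coordinates. -/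
/-!
A Parseval frame `τ` reproduces inner products, `⟪x, y⟫ = ∑ⱼ ⟪x, τⱼ⟫ ⟪τⱼ, y⟫`, so with
`M = maxⱼₖ ‖⟪τⱼ, ωₖ⟫‖` every coefficient of `x` in `ω` is at most `M ‖θ_τ x‖₁`. Hence
`‖x‖² = ‖θ_ω x‖₂² ≤ ‖θ_ω x‖₀ M² ‖θ_τ x‖₁²`, and Cauchy–Schwarz on the support of `θ_τ x` gives
`‖θ_τ x‖₁² ≤ ‖θ_τ x‖₀ ‖θ_τ x‖₂² = ‖θ_τ x‖₀ ‖x‖²`.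
-/

open Finset InnerProductSpace

section

variable (𝕜 : Type*) {E ι : Type*} [RCLike 𝕜] [NormedAddCommGroup E] [InnerProductSpace 𝕜 E]
  [Fintype ι]

def IsParsevalFrame (τ : ι → E) : Prop :=
  ∀ x : E, ‖x‖ ^ 2 = ∑ j, ‖(inner 𝕜 x (τ j) : 𝕜)‖ ^ 2

variable {𝕜}

theorem IsParsevalFrame.sum_inner_smul_eq {τ : ι → E} (hτ : IsParsevalFrame 𝕜 τ) (x : E) :
    ∑ j, (inner 𝕜 (τ j) x : 𝕜) • τ j = x := by
  set S : E →ₗ[𝕜] E := ∑ j, (rankOne 𝕜 (τ j) (τ j) : E →ₗ[𝕜] E)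
  have hS : S.IsSymmetric :=
    LinearMap.isSymmetric_sum _ fun j _ => isSymmetric_rankOne_self (τ j)
  -- Parseval says `⟪S y, y⟫ = ‖y‖²`, and a symmetric map is determined by its quadratic form.
  have hquad : ∀ y, inner 𝕜 ((S - LinearMap.id : E →ₗ[𝕜] E) y) y = 0 := fun y => by
    have hsum : ∑ j, (inner 𝕜 y (τ j) : 𝕜) * inner 𝕜 (τ j) y = (‖y‖ ^ 2 : ℝ) := by
      rw [hτ y]
      push_cast
      exact sum_congr rfl fun j _ => by rw [← inner_conj_symm (τ j) y, RCLike.mul_conj]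
    simp [S, inner_sub_left, sum_inner, inner_smul_left, hsum]
  have hSid : S = LinearMap.id := sub_eq_zero.mp ((hS.sub .id).inner_map_self_eq_zero.mp hquad)
  simpa [S] using LinearMap.congr_fun hSid x

theorem IsParsevalFrame.inner_eq_sum {τ : ι → E} (hτ : IsParsevalFrame 𝕜 τ) (x y : E) :
    inner 𝕜 x y = ∑ j, (inner 𝕜 x (τ j) : 𝕜) * inner 𝕜 (τ j) y := by
  conv_lhs => rw [← hτ.sum_inner_smul_eq y]
  simp [inner_sum, inner_smul_right, mul_comm]

end

section

variable {ι F : Type*} [Fintype ι] [SeminormedAddGroup F] {c : ι → F} {s : Finset ι}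

theorem sq_sum_norm_le_card_mul_sum_sq_norm (hs : ∀ j ∉ s, c j = 0) :
    (∑ j, ‖c j‖) ^ 2 ≤ #s * ∑ j, ‖c j‖ ^ 2 := by
  have h1 : ∑ j, ‖c j‖ = ∑ j ∈ s, ‖c j‖ :=
    (sum_subset (subset_univ s) fun j _ hj => by simp [hs j hj]).symm
  have h2 : ∑ j, ‖c j‖ ^ 2 = ∑ j ∈ s, ‖c j‖ ^ 2 :=
    (sum_subset (subset_univ s) fun j _ hj => by simp [hs j hj]).symm
  rw [h1, h2]
  exact sq_sum_le_card_mul_sum_sq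

theorem sum_sq_norm_le_card_mul_sq (hs : ∀ j ∉ s, c j = 0) {B : ℝ} (hB : ∀ j, ‖c j‖ ≤ B) :
    ∑ j, ‖c j‖ ^ 2 ≤ #s * B ^ 2 := by
  rw [← sum_subset (subset_univ s) fun j _ hj => by simp [hs j hj]]
  simpa using sum_le_card_nsmul s _ _ fun j _ => pow_le_pow_left₀ (norm_nonneg _) (hB j) 2

end

section

variable {𝕜 E ι κ : Type*} [RCLike 𝕜] [NormedAddCommGroup E] [InnerProductSpace 𝕜 E]
  [Fintype ι] [Fintype κ] {τ : ι → E} {ω : κ → E}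

theorem IsParsevalFrame.norm_inner_le (hτ : IsParsevalFrame 𝕜 τ) (x y : E) {M : ℝ}
    (hM : ∀ j, ‖(inner 𝕜 (τ j) y : 𝕜)‖ ≤ M) :
    ‖(inner 𝕜 x y : 𝕜)‖ ≤ M * ∑ j, ‖(inner 𝕜 x (τ j) : 𝕜)‖ := by
  rw [hτ.inner_eq_sum x y, mul_sum]
  refine (norm_sum_le _ _).trans (sum_le_sum fun j _ => ?_)
  rw [norm_mul, mul_comm]
  exact mul_le_mul_of_nonneg_right (hM j) (norm_nonneg _)

theorem IsParsevalFrame.one_le_card_mul_card_mul_sq (hτ : IsParsevalFrame 𝕜 τ)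
    (hω : IsParsevalFrame 𝕜 ω) {M : ℝ} (hM : ∀ j k, ‖(inner 𝕜 (τ j) (ω k) : 𝕜)‖ ≤ M)
    {x : E} (hx : x ≠ 0) {s : Finset ι} {t : Finset κ}
    (hs : ∀ j ∉ s, (inner 𝕜 x (τ j) : 𝕜) = 0) (ht : ∀ k ∉ t, (inner 𝕜 x (ω k) : 𝕜) = 0) :
    1 ≤ #s * #t * M ^ 2 := by
  set A := ∑ j, ‖(inner 𝕜 x (τ j) : 𝕜)‖
  have hx2 : 0 < ‖x‖ ^ 2 := by positivity
  have hxA : ‖x‖ ^ 2 ≤ #t * (M * A) ^ 2 := by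
    rw [hω x]
    exact sum_sq_norm_le_card_mul_sq ht fun k => hτ.norm_inner_le x (ω k) fun j => hM j k
  have hA : A ^ 2 ≤ #s * ‖x‖ ^ 2 := by
    rw [hτ x]
    exact sq_sum_norm_le_card_mul_sum_sq_norm hs
  have hchain : ‖x‖ ^ 2 ≤ #s * #t * M ^ 2 * ‖x‖ ^ 2 :=
    calc ‖x‖ ^ 2 ≤ #t * M ^ 2 * A ^ 2 := by linarith
      _ ≤ #t * M ^ 2 * (#s * ‖x‖ ^ 2) := by gcongr
      _ = #s * #t * M ^ 2 * ‖x‖ ^ 2 := by ring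
  exact le_of_mul_le_mul_right (by rwa [one_mul]) hx2

end

theorem donoho_stark_elad_bruckstein_ricaud_torresani_general
    {H : Type*} [NormedAddCommGroup H] [InnerProductSpace ℂ H]
    {n : ℕ} (τ ω : Fin n → H)
    (hτ : ∀ h : H, ‖h‖ ^ 2 = ∑ j, ‖(inner ℂ h (τ j) : ℂ)‖ ^ 2)
    (hω : ∀ h : H, ‖h‖ ^ 2 = ∑ j, ‖(inner ℂ h (ω j) : ℂ)‖ ^ 2)
    (h : H) (hh : h ≠ 0) :
    ((Finset.univ.filter (fun j => (inner ℂ h (τ j) : ℂ) ≠ 0)).card : ℝ) *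
      ((Finset.univ.filter (fun k => (inner ℂ h (ω k) : ℂ) ≠ 0)).card : ℝ) ≥
      1 / (⨆ j, ⨆ k, ‖(inner ℂ (τ j) (ω k) : ℂ)‖) ^ 2 := by
  set M := ⨆ j, ⨆ k, ‖(inner ℂ (τ j) (ω k) : ℂ)‖
  have hM (j k) : ‖(inner ℂ (τ j) (ω k) : ℂ)‖ ≤ M :=
    (le_ciSup (Finite.bddAbove_range _) k).trans
      (le_ciSup (Finite.bddAbove_range fun j => ⨆ k, ‖(inner ℂ (τ j) (ω k) : ℂ)‖) j)
  have key := IsParsevalFrame.one_le_card_mul_card_mul_sq hτ hω hM hh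
    (s := univ.filter fun j => (inner ℂ h (τ j) : ℂ) ≠ 0)
    (t := univ.filter fun k => (inner ℂ h (ω k) : ℂ) ≠ 0)
    (fun j hj => by simpa using hj) (fun k hk => by simpa using hk)
  exact div_le_of_le_mul₀ (sq_nonneg M) (by positivity) key

/-- Donoho–Stark–Elad–Bruckstein–Ricaud–Torrésani uncertainty principle: for two Parseval
frames `τ, ω` of a finite-dimensional Hilbert space and every nonzero `h`,
`‖θ_τ h‖₀ ⬝ ‖θ_ω h‖₀ ≥ 1 / max_{j,k} |⟨τ_j, ω_k⟩|²`. -/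
theorem donoho_stark_elad_bruckstein_ricaud_torresani
    {H : Type*} [NormedAddCommGroup H] [InnerProductSpace ℂ H] [FiniteDimensional ℂ H]
    {n : ℕ} (τ ω : Fin n → H)
    (hτ : ∀ h : H, ‖h‖ ^ 2 = ∑ j, ‖(inner ℂ h (τ j) : ℂ)‖ ^ 2)
    (hω : ∀ h : H, ‖h‖ ^ 2 = ∑ j, ‖(inner ℂ h (ω j) : ℂ)‖ ^ 2)
    (h : H) (hh : h ≠ 0) :
    ((Finset.univ.filter (fun j => (inner ℂ h (τ j) : ℂ) ≠ 0)).card : ℝ) *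
      ((Finset.univ.filter (fun k => (inner ℂ h (ω k) : ℂ) ≠ 0)).card : ℝ) ≥
      1 / (⨆ j, ⨆ k, ‖(inner ℂ (τ j) (ω k) : ℂ)‖) ^ 2 :=
  donoho_stark_elad_bruckstein_ricaud_torresani_general τ ω hτ hω h hh
end

section
/- Let p > 1 with conjugate exponent q, and let (f_α)_{α∈Ω} together with (τ_α) and (g_β)_{β∈Δ} together with (ω_β) be continuous p-Schauder frames for a Banach space X over finite or σ-finite measure spaces (Ω,μ), (Δ,ν): ‖x‖^p = ∫_Ω |f_α(x)|^p dμ, x = ∫_Δ g_β(x) ω_β dν weakly, etc. Assume C := sup_{α,β} |f_α(ω_β)| < ∞. Then for every nonzero x ∈ X, μ(supp(θ_f x))^{1/p} · ν(supp(θ_g x))^{1/q} ≥ 1/C, where supp(θ_f x) = {α : f_α(x) ≠ 0}. -/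
/-!
Bounding `‖x‖ = ‖θ_f x‖_p` by `‖θ_f x‖_∞ μ(supp θ_f x)^{1/p}`, and each `|f_α(x)|`, via the
reconstruction formula and Hölder's inequality on `supp θ_g x`, by
`C ‖θ_g x‖_1 ≤ C ‖x‖ ν(supp θ_g x)^{1/q}`, gives `‖x‖ ≤ C ‖x‖ μ(…)^{1/p} ν(…)^{1/q}`;
then divide by `‖x‖ ≠ 0`.
-/

open MeasureTheory
open scoped ENNReal

namespace MeasureTheory

variable {α E : Type*} [MeasurableSpace α] {μ : Measure α} [NormedAddCommGroup E]

theorem eLpNorm_le_mul_measure_support_rpow {f : α → E} {p C : ℝ≥0∞}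
    (hC : ∀ a, ‖f a‖ₑ ≤ C) :
    eLpNorm f p μ ≤ C * μ (Function.support f) ^ p.toReal⁻¹ := by
  rw [← eLpNorm_restrict_eq_of_support_subset subset_rfl, ← Measure.restrict_apply_univ]
  exact eLpNorm_le_of_ae_enorm_bound (ae_of_all _ hC)

/-- Hölder's inequality against the indicator of the support of `f`. -/
theorem eLpNorm_one_le_eLpNorm_mul_measure_support_rpow {f : α → E} {p q : ℝ}
    (hpq : p.HolderConjugate q) (hf : AEStronglyMeasurable (fun a => ‖f a‖) μ) :
    eLpNorm f 1 μ ≤ eLpNorm f (ENNReal.ofReal p) μ * μ (Function.support f) ^ (1 / q) := by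
  have hexp : 1 / (1 : ℝ≥0∞).toReal - 1 / (ENNReal.ofReal p).toReal = 1 / q := by
    rw [ENNReal.toReal_one, ENNReal.toReal_ofReal hpq.nonneg, one_div, one_div, one_div,
      inv_one, hpq.one_sub_inv]
  rw [← eLpNorm_norm f, ← eLpNorm_norm f (p := ENNReal.ofReal p),
    ← Function.support_comp_eq norm norm_eq_zero f,
    ← eLpNorm_restrict_eq_of_support_subset subset_rfl,
    ← eLpNorm_restrict_eq_of_support_subset (p := ENNReal.ofReal p) subset_rfl,
    ← Measure.restrict_apply_univ, ← hexp]
  exact eLpNorm_le_eLpNorm_mul_rpow_measure_univ (ENNReal.one_le_ofReal.mpr hpq.lt.le)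
    hf.restrict

/-- `0 < a` excludes the junk value `0` of the integral of a non-integrable function. -/
theorem ofReal_eq_eLpNorm_of_rpow_eq_integral {f : α → E} {p a : ℝ} (hp : 0 < p) (ha : 0 < a)
    (h : a ^ p = ∫ x, ‖f x‖ ^ p ∂μ) :
    ENNReal.ofReal a = eLpNorm f (ENNReal.ofReal p) μ := by
  have hint : Integrable (fun x => ‖f x‖ ^ p) μ :=
    Integrable.of_integral_ne_zero (h ▸ (Real.rpow_pos_of_pos ha p).ne')
  have hlint : ∫⁻ x, ‖f x‖ₑ ^ p ∂μ = ENNReal.ofReal (a ^ p) := by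
    rw [h, ofReal_integral_eq_lintegral_ofReal hint (ae_of_all _ fun _ => by positivity)]
    congr 1 with x
    rw [← ofReal_norm, ENNReal.ofReal_rpow_of_nonneg (norm_nonneg _) hp.le]
  rw [eLpNorm_eq_lintegral_rpow_enorm_toReal (by simpa using hp) ENNReal.ofReal_ne_top,
    ENNReal.toReal_ofReal hp.le, hlint, ENNReal.ofReal_rpow_of_nonneg (by positivity)
      (by positivity), ← Real.rpow_mul ha.le, mul_one_div_cancel hp.ne', Real.rpow_one]

theorem enorm_integral_mul_le_mul_eLpNorm_one {𝕜 : Type*} [NormedRing 𝕜] [NormedSpace ℝ 𝕜]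
    {φ ψ : α → 𝕜} {C : ℝ} (hφ : Integrable (fun a => ‖φ a‖) μ) (hψ : ∀ a, ‖ψ a‖ ≤ C) :
    ‖∫ a, φ a * ψ a ∂μ‖ₑ ≤ ENNReal.ofReal C * eLpNorm φ 1 μ := by
  have hle : ‖∫ a, φ a * ψ a ∂μ‖ ≤ C * ∫ a, ‖φ a‖ ∂μ := by
    rw [← integral_const_mul]
    refine norm_integral_le_of_norm_le (hφ.const_mul C) (ae_of_all _ fun a => ?_)
    calc ‖φ a * ψ a‖ ≤ ‖φ a‖ * ‖ψ a‖ := norm_mul_le _ _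
      _ ≤ ‖φ a‖ * C := by gcongr; exact hψ a
      _ = C * ‖φ a‖ := mul_comm _ _
  have hφ1 : ENNReal.ofReal (∫ a, ‖φ a‖ ∂μ) = eLpNorm φ 1 μ := by
    simpa only [norm_norm, enorm_norm, ← eLpNorm_one_eq_lintegral_enorm]
      using ofReal_integral_norm_eq_lintegral_enorm hφ
  rw [← ofReal_norm, ← hφ1, ← ENNReal.ofReal_mul' (integral_nonneg fun _ => norm_nonneg _)]
  exact ENNReal.ofReal_le_ofReal hle

end MeasureTheory

theorem ENNReal.ofReal_one_div_le_of_le_mul {a s : ℝ≥0∞} {C : ℝ} (ha : a ≠ 0) (ha' : a ≠ ∞)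
    (h : a ≤ ENNReal.ofReal C * s * a) : ENNReal.ofReal (1 / C) ≤ s := by
  have hCs : 1 ≤ ENNReal.ofReal C * s :=
    (ENNReal.mul_le_mul_iff_left ha ha').mp (by rwa [one_mul])
  calc ENNReal.ofReal (1 / C) ≤ (ENNReal.ofReal C)⁻¹ := one_div C ▸ ENNReal.ofReal_inv_le
    _ ≤ s := (ENNReal.inv_le_iff_le_mul (fun _ hC => by simp [hC] at hCs)
        (fun h => absurd h ENNReal.ofReal_ne_top)).mpr hCs

theorem continuous_uncertainty_principle_p_gt_one_general
    {Ω Δ : Type*} [MeasurableSpace Ω] [MeasurableSpace Δ]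
    (μ : Measure Ω) (ν : Measure Δ)
    {X : Type*} [NormedAddCommGroup X] [NormedSpace ℂ X]
    (p q : ℝ) (hpq : p.HolderConjugate q)
    (f : Ω → X →L[ℂ] ℂ) (g : Δ → X →L[ℂ] ℂ) (ω : Δ → X)
    (hf : ∀ x : X, ‖x‖ ^ p = ∫ α, ‖f α x‖ ^ p ∂μ)
    (hg : ∀ x : X, ‖x‖ ^ p = ∫ β, ‖g β x‖ ^ p ∂ν)
    (hgint : ∀ x : X, Integrable (fun β => ‖g β x‖) ν)
    (hexp : ∀ (x : X) (α : Ω), f α x = ∫ β, g β x * f α (ω β) ∂ν)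
    (C : ℝ) (hC : ∀ α β, ‖f α (ω β)‖ ≤ C)
    (x : X) (hx : x ≠ 0) :
    (μ {α | f α x ≠ 0}) ^ (1 / p) * (ν {β | g β x ≠ 0}) ^ (1 / q) ≥
      ENNReal.ofReal (1 / C) := by
  have hxpos : 0 < ‖x‖ := norm_pos_iff.2 hx
  have hθf := ofReal_eq_eLpNorm_of_rpow_eq_integral hpq.pos hxpos (hf x)
  have hθg := ofReal_eq_eLpNorm_of_rpow_eq_integral hpq.pos hxpos (hg x)
  have hθf_le (α : Ω) :
      ‖f α x‖ₑ ≤ ENNReal.ofReal C * (ENNReal.ofReal ‖x‖ * ν {β | g β x ≠ 0} ^ (1 / q)) := by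
    rw [hexp x α, hθg]
    grw [enorm_integral_mul_le_mul_eLpNorm_one (hgint x) (hC α),
      eLpNorm_one_le_eLpNorm_mul_measure_support_rpow hpq (hgint x).aestronglyMeasurable]
    rfl
  refine ENNReal.ofReal_one_div_le_of_le_mul (ENNReal.ofReal_pos.2 hxpos).ne'
    ENNReal.ofReal_ne_top ?_
  calc ENNReal.ofReal ‖x‖
      ≤ ENNReal.ofReal C * (ENNReal.ofReal ‖x‖ * ν {β | g β x ≠ 0} ^ (1 / q)) *
          μ {α | f α x ≠ 0} ^ (1 / p) := by
        refine hθf.trans_le ((eLpNorm_le_mul_measure_support_rpow hθf_le).trans_eq ?_)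
        rw [ENNReal.toReal_ofReal hpq.nonneg, ← one_div]
        rfl
    _ = _ := by ring

/-- Functional continuous Donoho–Stark–Elad–Bruckstein–Ricaud–Torrésani uncertainty
principle, case `p > 1` with conjugate exponent `q`: for continuous p-Schauder frames
`(f, τ)` over `(Ω, μ)` and `(g, ω)` over `(Δ, ν)` of a Banach space `X`, with
`C = sup |f α (ω β)| < ∞`, every nonzero `x` satisfies
`μ(supp θ_f x)^{1/p} ν(supp θ_g x)^{1/q} ≥ 1/C`. -/
theorem continuous_uncertainty_principle_p_gt_one
    {Ω Δ : Type*} [MeasurableSpace Ω] [MeasurableSpace Δ]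
    (μ : Measure Ω) (ν : Measure Δ) [SigmaFinite μ] [SigmaFinite ν]
    {X : Type*} [NormedAddCommGroup X] [NormedSpace ℂ X] [CompleteSpace X]
    (p q : ℝ) (hpq : p.HolderConjugate q)
    (f : Ω → X →L[ℂ] ℂ) (τ : Ω → X) (g : Δ → X →L[ℂ] ℂ) (ω : Δ → X)
    (hf : ∀ x : X, ‖x‖ ^ p = ∫ α, ‖f α x‖ ^ p ∂μ)
    (hg : ∀ x : X, ‖x‖ ^ p = ∫ β, ‖g β x‖ ^ p ∂ν)
    (hgint : ∀ x : X, Integrable (fun β => ‖g β x‖) ν)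
    (hexp : ∀ (x : X) (α : Ω), f α x = ∫ β, g β x * f α (ω β) ∂ν)
    (C : ℝ) (hC : ∀ α β, ‖f α (ω β)‖ ≤ C)
    (x : X) (hx : x ≠ 0) :
    (μ {α | f α x ≠ 0}) ^ (1 / p) * (ν {β | g β x ≠ 0}) ^ (1 / q) ≥
      ENNReal.ofReal (1 / C) :=
  continuous_uncertainty_principle_p_gt_one_general μ ν p q hpq f g ω hf hg hgint hexp C hC x hx
end

section
/- Let (f_α, τ_α)_{α∈Ω} and (g_β, ω_β)_{β∈Δ} be continuous 1-Schauder frames for a Banach space X: ‖x‖ = ∫_Ω |f_α(x)| dμ and x = ∫_Δ g_β(x) ω_β dν weakly. If C := sup_{α,β} |f_α(ω_β)| < ∞, then for every nonzero x ∈ X, μ({α : f_α(x) ≠ 0}) ≥ 1/C. -/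
/-!
Expanding `f α x` through the frame `(g, ω)` gives `‖f α x‖ ≤ C ‖x‖` for every `α`. Integrating
this over the set where `f α x ≠ 0` yields `‖x‖ = ∫ ‖f α x‖ dμ ≤ C ‖x‖ μ {α | f α x ≠ 0}`, and
`‖x‖ > 0` cancels.
-/

open MeasureTheory

open scoped ENNReal

theorem norm_integral_mul_le_mul_integral_norm {Δ : Type*} [MeasurableSpace Δ] {ν : Measure Δ}
    {𝕜 : Type*} [RCLike 𝕜] {G h : Δ → 𝕜} {C : ℝ}
    (hG : Integrable (fun β => ‖G β‖) ν) (hh : ∀ β, ‖h β‖ ≤ C) :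
    ‖∫ β, G β * h β ∂ν‖ ≤ C * ∫ β, ‖G β‖ ∂ν := by
  calc ‖∫ β, G β * h β ∂ν‖ ≤ ∫ β, ‖G β‖ * C ∂ν :=
        norm_integral_le_of_norm_le (hG.mul_const C) (.of_forall fun β => by
          rw [norm_mul]; exact mul_le_mul_of_nonneg_left (hh β) (norm_nonneg _))
    _ = C * ∫ β, ‖G β‖ ∂ν := by rw [integral_mul_const, mul_comm]

theorem lintegral_enorm_le_mul_measure_support {Ω : Type*} [MeasurableSpace Ω] {μ : Measure Ω}
    {E : Type*} [NormedAddCommGroup E] {F : Ω → E} {M : ℝ≥0∞} (hF : ∀ α, ‖F α‖ₑ ≤ M) :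
    ∫⁻ α, ‖F α‖ₑ ∂μ ≤ M * μ (Function.support F) := by
  calc ∫⁻ α, ‖F α‖ₑ ∂μ = ∫⁻ α in Function.support F, ‖F α‖ₑ ∂μ :=
        (setLIntegral_eq_of_support_subset (by simp)).symm
    _ ≤ ∫⁻ _ in Function.support F, M ∂μ := setLIntegral_mono measurable_const fun α _ => hF α
    _ = M * μ (Function.support F) := setLIntegral_const _ _

theorem ENNReal.ofReal_one_div_le_of_one_le_ofReal_mul {C : ℝ} {m : ℝ≥0∞}
    (h : 1 ≤ ENNReal.ofReal C * m) : ENNReal.ofReal (1 / C) ≤ m := by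
  have hC : 0 < C := by
    by_contra! hC
    simp [ENNReal.ofReal_of_nonpos hC] at h
  rw [one_div, ENNReal.ofReal_inv_of_pos hC, ENNReal.inv_le_iff_le_mul (by simp [hC]) (by simp)]
  exact h

theorem continuous_uncertainty_principle_p_eq_one_general
    {Ω Δ : Type*} [MeasurableSpace Ω] [MeasurableSpace Δ]
    (μ : Measure Ω) (ν : Measure Δ)
    {X : Type*} [NormedAddCommGroup X] [NormedSpace ℂ X]
    (f : Ω → X →L[ℂ] ℂ) (g : Δ → X →L[ℂ] ℂ) (ω : Δ → X)
    (hf : ∀ x : X, ‖x‖ = ∫ α, ‖f α x‖ ∂μ)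
    (hg : ∀ x : X, ‖x‖ = ∫ β, ‖g β x‖ ∂ν)
    (hexp : ∀ (x : X) (α : Ω), f α x = ∫ β, g β x * f α (ω β) ∂ν)
    (C : ℝ) (hC : ∀ α β, ‖f α (ω β)‖ ≤ C)
    (x : X) (hx : x ≠ 0) :
    μ {α | f α x ≠ 0} ≥ ENNReal.ofReal (1 / C) := by
  have hx_pos : 0 < ‖x‖ := norm_pos_iff.2 hx
  -- A nonzero Bochner integral forces integrability (the junk value is `0`).
  have hg_int : Integrable (fun β => ‖g β x‖) ν :=
    .of_integral_ne_zero (hg x ▸ hx_pos.ne')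
  have hbound : ∀ α, ‖f α x‖ₑ ≤ ENNReal.ofReal C * ‖x‖ₑ := fun α => by
    rw [← ofReal_norm, ← ofReal_norm, ← ENNReal.ofReal_mul' (norm_nonneg x)]
    refine ENNReal.ofReal_le_ofReal ?_
    rw [hexp x α, hg x]
    exact norm_integral_mul_le_mul_integral_norm hg_int (hC α)
  have hsupp : ‖x‖ₑ ≤ ENNReal.ofReal C * ‖x‖ₑ * μ {α | f α x ≠ 0} := by
    calc ‖x‖ₑ = ‖∫ α, ‖f α x‖ ∂μ‖ₑ := by rw [← hf x, enorm_norm]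
      _ ≤ ∫⁻ α, ‖f α x‖ₑ ∂μ := by
          simpa only [enorm_norm] using enorm_integral_le_lintegral_enorm (μ := μ) fun α => ‖f α x‖
      _ ≤ _ := lintegral_enorm_le_mul_measure_support hbound
  refine ENNReal.ofReal_one_div_le_of_one_le_ofReal_mul
    ((ENNReal.mul_le_mul_iff_left (enorm_ne_zero.2 hx) enorm_ne_top).1 ?_)
  rwa [one_mul, mul_right_comm]

/-- Case `p = 1` of the functional continuous uncertainty principle: for continuous
1-Schauder frames `(f, τ)` over `(Ω, μ)` and `(g, ω)` over `(Δ, ν)` of a Banach space `X`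
with `C = sup |f α (ω β)| < ∞`, every nonzero `x` satisfies `μ({α : f α x ≠ 0}) ≥ 1/C`. -/
theorem continuous_uncertainty_principle_p_eq_one
    {Ω Δ : Type*} [MeasurableSpace Ω] [MeasurableSpace Δ]
    (μ : Measure Ω) (ν : Measure Δ)
    {X : Type*} [NormedAddCommGroup X] [NormedSpace ℂ X] [CompleteSpace X]
    (f : Ω → X →L[ℂ] ℂ) (τ : Ω → X) (g : Δ → X →L[ℂ] ℂ) (ω : Δ → X)
    (hf : ∀ x : X, ‖x‖ = ∫ α, ‖f α x‖ ∂μ)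
    (hg : ∀ x : X, ‖x‖ = ∫ β, ‖g β x‖ ∂ν)
    (hgint : ∀ x : X, Integrable (fun β => ‖g β x‖) ν)
    (hexp : ∀ (x : X) (α : Ω), f α x = ∫ β, g β x * f α (ω β) ∂ν)
    (C : ℝ) (hC : ∀ α β, ‖f α (ω β)‖ ≤ C)
    (x : X) (hx : x ≠ 0) :
    μ {α | f α x ≠ 0} ≥ ENNReal.ofReal (1 / C) :=
  continuous_uncertainty_principle_p_eq_one_general μ ν f g ω hf hg hexp C hC x hx
end

section
/- Let (f_n, τ_n) and (g_m, ω_m) be unbounded 1-Schauder frames for a Banach space X indexed by ℕ with counting measure: for x ∈ D(θ_f), (f_n(x)) ∈ ℓ¹ and x = ∑_n f_n(x) τ_n (convergence in X), and similarly for g. Assume A := sup_{n,m} |f_n(ω_m)| < ∞ and B := sup_{n,m} |g_m(τ_n)| < ∞. Then for every nonzero x ∈ D(θ_f) ∩ D(θ_g), ‖θ_f x‖_0 · ‖θ_g x‖_0 ≥ 1/(A·B), where ‖θ_f x‖_0 = #{n : f_n(x) ≠ 0}. -/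
open scoped ENNReal

/-- Discrete unbounded Donoho–Stark–Elad–Bruckstein–Ricaud–Torrésani uncertainty principle
for `p = 1`: if `(f, τ)` and `(g, ω)` are unbounded 1-Schauder frames for a Banach space
`X` with `A = sup |f n (ω m)| < ∞`, `B = sup |g m (τ n)| < ∞`, then for every nonzero
`x ∈ D(θ_f) ∩ D(θ_g)`, `‖θ_f x‖₀ ⬝ ‖θ_g x‖₀ ≥ 1/(A B)`. -/
theorem unbounded_uncertainty_principle_one
    {X : Type*} [NormedAddCommGroup X] [NormedSpace ℂ X] [CompleteSpace X]
    (f g : ℕ → X →ₗ[ℂ] ℂ) (τ ω : ℕ → X) (A B : ℝ)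
    (hA : ∀ n m, ‖f n (ω m)‖ ≤ A) (hB : ∀ n m, ‖g m (τ n)‖ ≤ B)
    (hfrec : ∀ x : X, Summable (fun n => ‖f n x‖) → HasSum (fun n => f n x • τ n) x)
    (hgrec : ∀ x : X, Summable (fun m => ‖g m x‖) → HasSum (fun m => g m x • ω m) x)
    (x : X) (hx : x ≠ 0)
    (hfx : Summable (fun n => ‖f n x‖)) (hgx : Summable (fun m => ‖g m x‖))
    (hexpf : ∀ n, HasSum (fun m => g m x * f n (ω m)) (f n x))
    (hexpg : ∀ m, HasSum (fun n => f n x * g m (τ n)) (g m x)) :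
    ({n | f n x ≠ 0}.encard : ℝ≥0∞) * ({m | g m x ≠ 0}.encard : ℝ≥0∞) ≥
      ENNReal.ofReal (1 / (A * B)) := by
  set S := {n | f n x ≠ 0} with hS
  set T := {m | g m x ≠ 0} with hT
  have hA0 : 0 ≤ A := le_trans (norm_nonneg _) (hA 0 0)
  have hB0 : 0 ≤ B := le_trans (norm_nonneg _) (hB 0 0)
  -- S nonempty
  have hSne : S.Nonempty := by
    by_contra h
    rw [Set.not_nonempty_iff_eq_empty] at h
    have hall : ∀ n, f n x = 0 := fun n =>
      not_not.mp (Set.eq_empty_iff_forall_notMem.mp h n)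
    apply hx
    have := hfrec x hfx
    simp only [hall, zero_smul] at this
    have h0 : HasSum (fun _ : ℕ => (0 : X)) 0 := hasSum_zero
    exact (h0.unique this).symm
  have hTne : T.Nonempty := by
    by_contra h
    rw [Set.not_nonempty_iff_eq_empty] at h
    have hall : ∀ m, g m x = 0 := fun m =>
      not_not.mp (Set.eq_empty_iff_forall_notMem.mp h m)
    apply hx
    have := hgrec x hgx
    simp only [hall, zero_smul] at this
    exact (hasSum_zero.unique this).symm
  have hS1 : (1 : ℕ∞) ≤ S.encard := Set.one_le_encard_iff_nonempty.mpr hSne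
  have hT1 : (1 : ℕ∞) ≤ T.encard := Set.one_le_encard_iff_nonempty.mpr hTne
  have hScast : (1 : ℝ≥0∞) ≤ (S.encard : ℝ≥0∞) := by
    exact_mod_cast hS1
  have hTcast : (1 : ℝ≥0∞) ≤ (T.encard : ℝ≥0∞) := by
    exact_mod_cast hT1
  by_cases hSfin : S.Finite
  · by_cases hTfin : T.Finite
    · -- main case
      set F := ∑' n, ‖f n x‖ with hF
      set G := ∑' m, ‖g m x‖ with hG
      obtain ⟨n0, hn0⟩ := hSne
      have hFpos : 0 < F := by
        have h1 : ‖f n0 x‖ ≤ F := Summable.le_tsum hfx n0 (fun _ _ => norm_nonneg _)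
        have : 0 < ‖f n0 x‖ := norm_pos_iff.mpr hn0
        linarith
      -- bound each |f n x| by A * G
      have hfb : ∀ n, ‖f n x‖ ≤ A * G := by
        intro n
        have hsum : Summable (fun m => ‖g m x * f n (ω m)‖) := by
          apply Summable.of_nonneg_of_le (fun _ => norm_nonneg _) ?_ (hgx.mul_right A)
          intro m
          rw [norm_mul]
          exact mul_le_mul_of_nonneg_left (hA n m) (norm_nonneg _)
        calc ‖f n x‖ = ‖∑' m, g m x * f n (ω m)‖ := by rw [(hexpf n).tsum_eq]
          _ ≤ ∑' m, ‖g m x * f n (ω m)‖ := norm_tsum_le_tsum_norm hsum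
          _ ≤ ∑' m, ‖g m x‖ * A := by
              apply Summable.tsum_le_tsum _ hsum (hgx.mul_right A)
              intro m
              rw [norm_mul]
              exact mul_le_mul_of_nonneg_left (hA n m) (norm_nonneg _)
          _ = G * A := tsum_mul_right
          _ = A * G := mul_comm _ _
      have hgb : ∀ m, ‖g m x‖ ≤ B * F := by
        intro m
        have hsum : Summable (fun n => ‖f n x * g m (τ n)‖) := by
          apply Summable.of_nonneg_of_le (fun _ => norm_nonneg _) ?_ (hfx.mul_right B)
          intro n
          rw [norm_mul]
          exact mul_le_mul_of_nonneg_left (hB n m) (norm_nonneg _)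
        calc ‖g m x‖ = ‖∑' n, f n x * g m (τ n)‖ := by rw [(hexpg m).tsum_eq]
          _ ≤ ∑' n, ‖f n x * g m (τ n)‖ := norm_tsum_le_tsum_norm hsum
          _ ≤ ∑' n, ‖f n x‖ * B := by
              apply Summable.tsum_le_tsum _ hsum (hfx.mul_right B)
              intro n
              rw [norm_mul]
              exact mul_le_mul_of_nonneg_left (hB n m) (norm_nonneg _)
          _ = F * B := tsum_mul_right
          _ = B * F := mul_comm _ _
      -- F as finite sum over S
      have hFsum : F = ∑ n ∈ hSfin.toFinset, ‖f n x‖ := by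
        apply tsum_eq_sum
        intro n hn
        have : f n x = 0 := by
          by_contra h
          exact hn (hSfin.mem_toFinset.mpr h)
        simp [this]
      have hGsum : G = ∑ m ∈ hTfin.toFinset, ‖g m x‖ := by
        apply tsum_eq_sum
        intro m hm
        have : g m x = 0 := by
          by_contra h
          exact hm (hTfin.mem_toFinset.mpr h)
        simp [this]
      have hFle : F ≤ (hSfin.toFinset.card : ℝ) * (A * G) := by
        rw [hFsum]
        calc ∑ n ∈ hSfin.toFinset, ‖f n x‖ ≤ ∑ _n ∈ hSfin.toFinset, A * G :=
              Finset.sum_le_sum (fun n _ => hfb n)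
          _ = (hSfin.toFinset.card : ℝ) * (A * G) := by
              rw [Finset.sum_const, nsmul_eq_mul]
      have hGle : G ≤ (hTfin.toFinset.card : ℝ) * (B * F) := by
        rw [hGsum]
        calc ∑ m ∈ hTfin.toFinset, ‖g m x‖ ≤ ∑ _m ∈ hTfin.toFinset, B * F :=
              Finset.sum_le_sum (fun m _ => hgb m)
          _ = (hTfin.toFinset.card : ℝ) * (B * F) := by
              rw [Finset.sum_const, nsmul_eq_mul]
      set s := (hSfin.toFinset.card : ℝ)
      set t := (hTfin.toFinset.card : ℝ)
      have hs0 : 0 ≤ s := Nat.cast_nonneg _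
      have ht0 : 0 ≤ t := Nat.cast_nonneg _
      have h2 : F ≤ s * A * t * B * F := by
        nlinarith [hFle, hGle, hs0, hA0,
          mul_le_mul_of_nonneg_left hGle (mul_nonneg hs0 hA0)]
      have hkey : 1 ≤ s * t * (A * B) := by
        nlinarith [h2, hFpos]
      have hreal : 1 / (A * B) ≤ s * t := by
        have hABpos : 0 < A * B := by
          by_contra hc
          push_neg at hc
          have := mul_nonpos_of_nonneg_of_nonpos (mul_nonneg hs0 ht0) hc
          linarith
        rw [div_le_iff₀ hABpos]
        linarith [hkey]
      -- convert to ENNReal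
      have hcard : (S.encard : ℝ≥0∞) * (T.encard : ℝ≥0∞)
          = ((hSfin.toFinset.card * hTfin.toFinset.card : ℕ) : ℝ≥0∞) := by
        rw [hSfin.encard_eq_coe_toFinset_card, hTfin.encard_eq_coe_toFinset_card]
        push_cast
        ring
      rw [ge_iff_le, hcard, ← ENNReal.ofReal_natCast]
      apply ENNReal.ofReal_le_ofReal
      push_cast
      exact hreal
    · have hTtop : (T.encard : ℝ≥0∞) = ⊤ := by
        rw [Set.Infinite.encard_eq hTfin]; exact ENat.toENNReal_top
      rw [ge_iff_le, hTtop, ENNReal.mul_top (zero_lt_one.trans_le hScast).ne']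
      exact le_top
  · have hStop : (S.encard : ℝ≥0∞) = ⊤ := by
      rw [Set.Infinite.encard_eq hSfin]; exact ENat.toENNReal_top
    rw [ge_iff_le, hStop, ENNReal.top_mul (zero_lt_one.trans_le hTcast).ne']
    exact le_top
end
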